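/- Let K : ℝ → ℝ be even with ∫(1+r²)|K(r)| dr < ∞, let Q = (-∞,0)×(0,∞), and define P(u,v) = (1/2)∬_Q K(x-y)(u(x)v(y) - v(x)u(y)) dx dy. Then P(e₁, e₁') = -(1/4)κ₂, where e₁(x) = x and κ₂ = ∫_ℝ r² K(r) dr. -/

import Mathlib

open MeasureTheory Set

noncomputable def shearT : ℝ × ℝ ≃ᵐ ℝ × ℝ where
  toEquiv :=
    { toFun := fun p => (p.1 + p.2, p.2)
      invFun := fun p => (p.1 - p.2, p.2)
      left_inv := fun p => by simp
      right_inv := fun p => by simp }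
  measurable_toFun := (measurable_fst.add measurable_snd).prodMk measurable_snd
  measurable_invFun := (measurable_fst.sub measurable_snd).prodMk measurable_snd

theorem pairing_e1_e1' (K : ℝ → ℝ) (hK : Measurable K)
    (hsym : ∀ r : ℝ, K r = K (-r))
    (hint : Integrable (fun r => (1 + r ^ 2) * |K r|)) :
    (1/2) * (∫ z in (Iio (0:ℝ) ×ˢ Ioi (0:ℝ)),
        K (z.1 - z.2) * (z.1 * 1 - 1 * z.2)) =
      -((1/4) * ∫ r, r ^ 2 * K r) := by
  -- notation
  set g : ℝ → ℝ := fun t => K t * t with hg_def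
  have hgmeas : Measurable g := hK.mul measurable_id
  set A : Set (ℝ × ℝ) := {q : ℝ × ℝ | q.1 + q.2 < 0 ∧ 0 < q.2} with hA_def
  have hA : MeasurableSet A := by
    have : A = ((fun q : ℝ × ℝ => q.1 + q.2) ⁻¹' Iio 0) ∩ (Prod.snd ⁻¹' Ioi 0) := rfl
    rw [this]
    exact ((measurable_fst.add measurable_snd) measurableSet_Iio).inter
      (measurable_snd measurableSet_Ioi)
  set h : ℝ × ℝ → ℝ := A.indicator (fun q => g q.1) with hh_def
  have hS : MeasurableSet (Iio (0:ℝ) ×ˢ Ioi (0:ℝ)) :=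
    measurableSet_Iio.prod measurableSet_Ioi
  -- pointwise facts
  have hslice : ∀ t y : ℝ,
      h (t, y) = (Ioo (0:ℝ) (-t)).indicator (fun _ => g t) y := by
    intro t y
    simp only [hh_def, indicator_apply, hA_def, mem_setOf_eq, mem_Ioo]
    exact if_congr ⟨fun ⟨a, b⟩ => ⟨b, by linarith⟩, fun ⟨a, b⟩ => ⟨by linarith, a⟩⟩ rfl rfl
  -- integrable facts on ℝ
  have habs : ∀ t : ℝ, |g t| * |t| = t ^ 2 * |K t| := by
    intro t
    rw [hg_def]
    simp only [abs_mul]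
    rw [mul_assoc, abs_mul_abs_self]
    ring
  have hg2 : Integrable (fun t => t ^ 2 * K t) := by
    refine hint.mono ((measurable_id.pow_const 2).mul hK).aestronglyMeasurable ?_
    filter_upwards with t
    have h0 : 0 ≤ (1 + t ^ 2) * |K t| := by positivity
    rw [Real.norm_eq_abs, Real.norm_eq_abs, abs_of_nonneg h0, abs_mul, abs_pow, sq_abs]
    nlinarith [abs_nonneg (K t)]
  -- the key finiteness lemma
  have key : ∫⁻ q : ℝ × ℝ, A.indicator (fun q => ENNReal.ofReal |g q.1|) q ∂(volume.prod volume) < ⊤ := by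
    have Fmeas : Measurable (A.indicator (fun q : ℝ × ℝ => ENNReal.ofReal |g q.1|)) :=
      (ENNReal.measurable_ofReal.comp ((hgmeas.comp measurable_fst).abs)).indicator hA
    rw [lintegral_prod _ Fmeas.aemeasurable]
    have inner_eq : ∀ t : ℝ,
        (∫⁻ y, A.indicator (fun q : ℝ × ℝ => ENNReal.ofReal |g q.1|) (t, y)) =
          ENNReal.ofReal |g t| * ENNReal.ofReal (-t - 0) := by
      intro t
      have : ∀ y, A.indicator (fun q : ℝ × ℝ => ENNReal.ofReal |g q.1|) (t, y) =
          (Ioo (0:ℝ) (-t)).indicator (fun _ => ENNReal.ofReal |g t|) y := by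
        intro y
        simp only [indicator_apply, hA_def, mem_setOf_eq, mem_Ioo]
        exact if_congr ⟨fun ⟨a, b⟩ => ⟨b, by linarith⟩, fun ⟨a, b⟩ => ⟨by linarith, a⟩⟩ rfl rfl
      simp_rw [this]
      rw [lintegral_indicator measurableSet_Ioo, setLIntegral_const, Real.volume_Ioo]
    simp_rw [inner_eq]
    have bound : ∀ t : ℝ, ENNReal.ofReal |g t| * ENNReal.ofReal (-t - 0) ≤
        ENNReal.ofReal ((1 + t ^ 2) * |K t|) := by
      intro t
      rw [← ENNReal.ofReal_mul (abs_nonneg _)]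
      refine ENNReal.ofReal_le_ofReal ?_
      have h1 : |g t| * (-t - 0) ≤ |g t| * |t| := by
        refine mul_le_mul_of_nonneg_left ?_ (abs_nonneg _)
        simp only [sub_zero]
        exact neg_le_abs t
      refine h1.trans ?_
      rw [habs t]
      nlinarith [abs_nonneg (K t)]
    refine lt_of_le_of_lt (lintegral_mono bound) ?_
    have := hint.hasFiniteIntegral
    rw [hasFiniteIntegral_iff_norm] at this
    refine lt_of_le_of_lt (lintegral_mono fun t => ?_) this
    exact ENNReal.ofReal_le_ofReal (le_abs_self _)
  -- integrability of h
  have hhmeas : Measurable h := (hgmeas.comp measurable_fst).indicator hA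
  have hnorm : ∀ q : ℝ × ℝ, (‖h q‖₊ : ENNReal) =
      A.indicator (fun q => ENNReal.ofReal |g q.1|) q := by
    intro q
    by_cases hq : q ∈ A <;>
      simp [hh_def, indicator_apply, hq, ← enorm_eq_nnnorm, Real.enorm_eq_ofReal_abs]
  have hh_int : Integrable h (volume.prod volume) := by
    refine ⟨hhmeas.aestronglyMeasurable, ?_⟩
    rw [hasFiniteIntegral_iff_norm]
    have : ∀ q : ℝ × ℝ, ENNReal.ofReal ‖h q‖ =
        A.indicator (fun q => ENNReal.ofReal |g q.1|) q := by
      intro q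
      rw [ofReal_norm]
      exact hnorm q
    simp_rw [this]
    exact key
  -- Step 1: rewrite the integrand
  have step1 : (∫ z in (Iio (0:ℝ) ×ˢ Ioi (0:ℝ)), K (z.1 - z.2) * (z.1 * 1 - 1 * z.2)) =
      ∫ z in (Iio (0:ℝ) ×ˢ Ioi (0:ℝ)), g (z.1 - z.2) := by
    refine integral_congr_ae (Filter.Eventually.of_forall fun z => ?_)
    simp only [hg_def]
    ring
  -- Step 2: indicator and shear
  have step2 : (∫ z in (Iio (0:ℝ) ×ˢ Ioi (0:ℝ)), g (z.1 - z.2)) = ∫ q, h q := by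
    rw [← integral_indicator hS]
    have hMP : MeasurePreserving (shearT : ℝ × ℝ → ℝ × ℝ) volume volume := by
      rw [show (volume : Measure (ℝ × ℝ)) = volume.prod volume from (Measure.volume_eq_prod ℝ ℝ)]
      exact measurePreserving_add_prod volume volume
    rw [← hMP.integral_comp' ((Iio (0:ℝ) ×ˢ Ioi (0:ℝ)).indicator fun z => g (z.1 - z.2))]
    refine integral_congr_ae (Filter.Eventually.of_forall fun q => ?_)
    show (Iio (0:ℝ) ×ˢ Ioi (0:ℝ)).indicator (fun z => g (z.1 - z.2)) (q.1 + q.2, q.2) = h q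
    simp only [hh_def, indicator_apply, mem_prod, mem_Iio, mem_Ioi, hA_def, mem_setOf_eq]
    rcases em (q.1 + q.2 < 0 ∧ 0 < q.2) with hq | hq
    · rw [if_pos hq, if_pos hq, add_sub_cancel_right]
    · rw [if_neg hq, if_neg hq]
  -- Step 3: Fubini
  have step3 : (∫ q, h q) = ∫ t, (volume (Ioo (0:ℝ) (-t))).toReal • g t := by
    rw [show (volume : Measure (ℝ × ℝ)) = volume.prod volume from (Measure.volume_eq_prod ℝ ℝ)]
    rw [MeasureTheory.integral_prod _ hh_int]
    refine integral_congr_ae (Filter.Eventually.of_forall fun t => ?_)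
    simp_rw [hslice t]
    rw [integral_indicator_const (g t) measurableSet_Ioo]
    rw [measureReal_def]
  -- Step 4: compute the outer integrand
  have step4 : (fun t : ℝ => (volume (Ioo (0:ℝ) (-t))).toReal • g t) =
      (Iio (0:ℝ)).indicator fun t => -(t ^ 2 * K t) := by
    funext t
    rw [Real.volume_Ioo, indicator_apply]
    rcases lt_or_ge t 0 with ht | ht
    · rw [if_pos (mem_Iio.2 ht), ENNReal.toReal_ofReal (by linarith)]
      simp only [smul_eq_mul, hg_def]
      ring
    · rw [if_neg (by simp [mem_Iio]; linarith)]
      have : (-t - 0 : ℝ) ≤ 0 := by linarith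
      rw [ENNReal.ofReal_eq_zero.2 this]
      simp
  -- Step 5: symmetry
  have heven : ∀ t : ℝ, (-t) ^ 2 * K (-t) = t ^ 2 * K t := by
    intro t
    rw [← hsym t]
    ring
  have step5 : (∫ t in Iio (0:ℝ), t ^ 2 * K t) = (1/2) * ∫ t, t ^ 2 * K t := by
    have hsplit : (∫ t in Iic (0:ℝ), t ^ 2 * K t) + (∫ t in Ioi (0:ℝ), t ^ 2 * K t) =
        ∫ t, t ^ 2 * K t := intervalIntegral.integral_Iic_add_Ioi hg2.integrableOn
      hg2.integrableOn
    have hrefl : (∫ t in Ioi (0:ℝ), t ^ 2 * K t) = ∫ t in Iic (0:ℝ), t ^ 2 * K t := by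
      have h1 := integral_comp_neg_Ioi (0:ℝ) (fun u => u ^ 2 * K u)
      simp only [heven, neg_zero] at h1
      exact h1
    rw [integral_Iic_eq_integral_Iio] at hsplit hrefl
    rw [← hsplit, hrefl]
    ring
  rw [step1, step2, step3, step4, integral_indicator measurableSet_Iio, integral_neg, step5]
  ring
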